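/- arXiv:1807.09831 — 2 statements merged into one kernel-verified Lean document; each statement's English description precedes it below -/
import Mathlib

section
/- Let G ≤ Sym(M) act 2-homogeneously on M, where |M| = m ≥ 5, let V = F_2^m with G acting by permuting coordinates, and let C be a G-invariant F_2-subspace of V with minimum distance δ = m. Then C = {0, 1}, the binary repetition code (1 being the all-ones vector), and C is (X,2)-neighbour-transitive, where X = T_C ⋊ G = {v ↦ v^σ + c : σ ∈ G, c ∈ C}. -/
open Equiv

namespace Paper

/-- A Hamming-graph automorphism of `Fin m → Q` given by entrywise permutations `h`
and a permutation `σ` of the entries. -/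
def IsQAutPair {m : ℕ} {Q : Type*} (g : Perm (Fin m → Q)) (h : Fin m → Perm Q)
    (σ : Perm (Fin m)) : Prop :=
  ∀ α i, g α i = h i (α (σ.symm i))

/-- `g` is an automorphism of the Hamming graph `H(m,q)`. -/
def IsQAut {m : ℕ} {Q : Type*} (g : Perm (Fin m → Q)) : Prop :=
  ∃ h σ, IsQAutPair g h σ

/-- The permutation group `X_i^{Q_i}` induced on the alphabet in entry `i`
by the stabiliser in `X` of the entry `i`. -/
def indQ {m : ℕ} {Q : Type*} (X : Set (Perm (Fin m → Q))) (i : Fin m) : Set (Perm Q) :=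
  {π | ∃ g ∈ X, ∃ h σ, IsQAutPair g h σ ∧ σ i = i ∧ h i = π}

/-- `C_s`, the set of vertices at Hamming distance exactly `s` from the code `C`. -/
def distSet {m : ℕ} {Q : Type*} [DecidableEq Q] (C : Set (Fin m → Q)) (s : ℕ) :
    Set (Fin m → Q) :=
  {v | (∃ c ∈ C, hammingDist v c = s) ∧ ∀ c ∈ C, s ≤ hammingDist v c}

/-- `C` is `(X,s)`-neighbour-transitive: `X` acts transitively on each of
`C = C_0, C_1, …, C_s`. -/
def NbrTrans {m : ℕ} {Q : Type*} [DecidableEq Q] (X : Set (Perm (Fin m → Q)))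
    (C : Set (Fin m → Q)) (s : ℕ) : Prop :=
  ∀ j ≤ s, ∀ u ∈ distSet C j, ∀ v ∈ distSet C j, ∃ g ∈ X, g u = v

/-- `δ` is the minimum distance of the code `C`. -/
def IsMinDist {m : ℕ} {Q : Type*} [DecidableEq Q] (C : Set (Fin m → Q)) (δ : ℕ) : Prop :=
  (∃ u ∈ C, ∃ v ∈ C, u ≠ v ∧ hammingDist u v = δ) ∧
  ∀ u ∈ C, ∀ v ∈ C, u ≠ v → δ ≤ hammingDist u v

/-- The vertex set `V = F_2^m` of the binary Hamming graph `H(m,2)`. -/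
abbrev BV (m : ℕ) : Type := Fin m → ZMod 2

/-- `g` is an automorphism of the binary Hamming graph `H(m,2)`:
`g : v ↦ v^σ + c` for some `σ ∈ Sym(M)` and `c ∈ V`. -/
def IsB2Aut {m : ℕ} (g : Perm (BV m)) : Prop :=
  ∃ (σ : Perm (Fin m)) (c : BV m), ∀ v, g v = (fun i => v (σ.symm i)) + c

/-- The dual of a binary code under the standard inner product. -/
def dualCode {m : ℕ} (D : Set (BV m)) : Set (BV m) :=
  {w | ∀ v ∈ D, (∑ i, v i * w i) = 0}


/-!
Two codewords at distance `m` differ in every coordinate, so their sum is the all-ones vector `1`;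
likewise every nonzero codeword is at distance `m` from `0`, hence equals `1`, and `C = {0, 1}`.
A vertex `u` at distance `j ≤ 2` from `C` is `w + c` with `c ∈ {0, 1}` and `wt(w) = j`. A
2-homogeneous group on at least three points is transitive, so it moves any set of size `j ≤ 2`
onto any other, i.e. any weight-`j` vector onto any other; since `0` and `1` are fixed by every
coordinate permutation, `v ↦ v^σ + c + c'` then maps `w + c` to `w' + c'`.
-/

def IsTwoHomogeneous {α : Type*} (G : Subgroup (Perm α)) : Prop :=
  ∀ i j k l : α, i ≠ j → k ≠ l → ∃ σ ∈ G, (σ i = k ∧ σ j = l) ∨ (σ i = l ∧ σ j = k)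

namespace IsTwoHomogeneous

variable {α : Type*} [Fintype α] {G : Subgroup (Perm α)}

/-- Send `a` to `b` via a third point `k`: a group element maps `{a, k}` to `{b, k}`, and
either it fixes `k` or its square sends `a` to `b`. -/
theorem exists_apply_eq (hG : IsTwoHomogeneous G) (hα : 2 < Fintype.card α) (a b : α) :
    ∃ σ ∈ G, σ a = b := by
  classical
  by_cases hab : a = b
  · exact ⟨1, G.one_mem, hab⟩
  have hcard : ({a, b} : Finset α).card < Finset.univ.card :=
    (Finset.card_le_two).trans_lt (by simpa using hα)
  obtain ⟨k, -, hk⟩ := Finset.exists_mem_notMem_of_card_lt_card hcard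
  simp only [Finset.mem_insert, Finset.mem_singleton, not_or] at hk
  obtain ⟨σ, hσG, ⟨hσa, -⟩ | ⟨hσa, hσk⟩⟩ := hG a k b k (Ne.symm hk.1) (Ne.symm hk.2)
  · exact ⟨σ, hσG, hσa⟩
  · exact ⟨σ * σ, G.mul_mem hσG hσG, by simp [hσa, hσk]⟩

theorem exists_map_eq [DecidableEq α] (hG : IsTwoHomogeneous G) (hα : 2 < Fintype.card α)
    {s t : Finset α} (hst : s.card = t.card) (hs : s.card ≤ 2) :
    ∃ σ ∈ G, s.map σ.toEmbedding = t := by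
  interval_cases h : s.card
  · exact ⟨1, G.one_mem, by simp_all [eq_comm]⟩
  · obtain ⟨x, rfl⟩ := Finset.card_eq_one.mp h
    obtain ⟨y, rfl⟩ := Finset.card_eq_one.mp hst.symm
    obtain ⟨σ, hσG, hσ⟩ := hG.exists_apply_eq hα x y
    exact ⟨σ, hσG, by simp [hσ]⟩
  · obtain ⟨x, x', hx, rfl⟩ := Finset.card_eq_two.mp h
    obtain ⟨y, y', hy, rfl⟩ := Finset.card_eq_two.mp hst.symm
    obtain ⟨σ, hσG, ⟨h₁, h₂⟩ | ⟨h₁, h₂⟩⟩ := hG x x' y y' hx hy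
    · exact ⟨σ, hσG, by simp [h₁, h₂]⟩
    · exact ⟨σ, hσG, by simp [h₁, h₂, Finset.pair_comm]⟩

end IsTwoHomogeneous

section BinaryVectors

variable {ι : Type*} [Fintype ι]

theorem zmod_two_eq_of_ne_zero_iff : ∀ {x y : ZMod 2}, (x ≠ 0 ↔ y ≠ 0) → x = y := by decide

theorem hammingDist_eq_hammingNorm_add (u v : ι → ZMod 2) :
    hammingDist u v = hammingNorm (u + v) := by
  rw [hammingDist_eq_hammingNorm, ZModModule.neg_eq_self]

theorem exists_perm_apply_eq_of_hammingNorm_eq [DecidableEq ι] {G : Subgroup (Perm ι)}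
    (hG : IsTwoHomogeneous G) (hι : 2 < Fintype.card ι) {a b : ι → ZMod 2}
    (hab : hammingNorm a = hammingNorm b) (ha : hammingNorm a ≤ 2) :
    ∃ σ ∈ G, ∀ i, a (σ.symm i) = b i := by
  obtain ⟨σ, hσG, hσ⟩ := hG.exists_map_eq hι hab ha
  refine ⟨σ, hσG, fun i => zmod_two_eq_of_ne_zero_iff ?_⟩
  simpa [Finset.mem_map_equiv] using (Finset.ext_iff.mp hσ i)

theorem add_eq_one_of_hammingDist_eq_card {u v : ι → ZMod 2}
    (h : hammingDist u v = Fintype.card ι) : u + v = 1 := by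
  have hne := Finset.filter_card_eq h
  funext i
  have : ∀ x y : ZMod 2, x ≠ y → x + y = 1 := by decide
  exact this _ _ (hne i (Finset.mem_univ i))

end BinaryVectors

theorem coe_eq_zero_one_of_isMinDist {m : ℕ} {C : Submodule (ZMod 2) (BV m)}
    (hδ : IsMinDist (C : Set (BV m)) m) : (C : Set (BV m)) = {0, 1} := by
  obtain ⟨⟨u, hu, v, hv, -, huv⟩, hmin⟩ := hδ
  have hone : (1 : BV m) ∈ C := by
    rw [← add_eq_one_of_hammingDist_eq_card (by simpa using huv)]
    exact C.add_mem hu hv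
  ext x
  simp only [SetLike.mem_coe, Set.mem_insert_iff, Set.mem_singleton_iff]
  refine ⟨fun hx => or_iff_not_imp_left.mpr fun hx0 => ?_, ?_⟩
  · have hdist : hammingDist x 0 = Fintype.card (Fin m) := by
      rw [Fintype.card_fin]
      exact le_antisymm (hammingDist_le_card_fintype.trans_eq (Fintype.card_fin m))
        (hmin x hx 0 C.zero_mem hx0)
    simpa using add_eq_one_of_hammingDist_eq_card hdist
  · rintro (rfl | rfl)
    · exact C.zero_mem
    · exact hone

theorem nbrTrans_zero_one {m : ℕ} (hm : 2 < m) {G : Subgroup (Perm (Fin m))}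
    (hG : IsTwoHomogeneous G) :
    NbrTrans {g | ∃ σ ∈ G, ∃ c ∈ ({0, 1} : Set (BV m)), ∀ v, g v = (fun i => v (σ.symm i)) + c}
      {0, 1} 2 := by
  rintro j hj u ⟨⟨c, hc, hu⟩, -⟩ v ⟨⟨c', hc', hv⟩, -⟩
  rw [hammingDist_eq_hammingNorm_add] at hu hv
  obtain ⟨σ, hσG, hσ⟩ := exists_perm_apply_eq_of_hammingNorm_eq hG (by simpa using hm)
    (hu.trans hv.symm) (hu ▸ hj)
  have hcc' : c + c' ∈ ({0, 1} : Set (BV m)) := by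
    rcases hc with rfl | rfl <;> rcases hc' with rfl | rfl <;> simp [ZModModule.add_self]
  have hcσ : ∀ i, c (σ.symm i) = c i := by
    rcases hc with rfl | rfl <;> simp
  refine ⟨(σ.arrowCongr (Equiv.refl _)).trans (Equiv.addRight (c + c')),
    ⟨σ, hσG, c + c', hcc', fun _ => rfl⟩, funext fun i => ?_⟩
  have hi : u (σ.symm i) + c i = v i + c' i := by simpa [hcσ] using hσ i
  change u (σ.symm i) + (c i + c' i) = v i
  rw [← add_assoc, hi, CharTwo.add_cancel_right]

theorem stmt11_general (m : ℕ) (hm : 5 ≤ m)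
    (G : Subgroup (Perm (Fin m)))
    (hG : ∀ i j k l : Fin m, i ≠ j → k ≠ l →
      ∃ σ ∈ G, (σ i = k ∧ σ j = l) ∨ (σ i = l ∧ σ j = k))
    (C : Submodule (ZMod 2) (BV m))
    (hδ : IsMinDist (C : Set (BV m)) m)
    (X : Set (Perm (BV m)))
    (hX : X = {g | ∃ σ ∈ G, ∃ c ∈ C, ∀ v, g v = (fun i => v (σ.symm i)) + c}) :
    (C : Set (BV m)) = {0, fun _ => 1} ∧ NbrTrans X (C : Set (BV m)) 2 := by
  have hC := coe_eq_zero_one_of_isMinDist hδ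
  refine ⟨hC, ?_⟩
  have hX' : X = {g | ∃ σ ∈ G, ∃ c ∈ (C : Set (BV m)), ∀ v, g v = (fun i => v (σ.symm i)) + c} :=
    hX
  rw [hX', hC]
  exact nbrTrans_zero_one (by omega) hG

theorem stmt11 (m : ℕ) (hm : 5 ≤ m)
    (G : Subgroup (Perm (Fin m)))
    (hG : ∀ i j k l : Fin m, i ≠ j → k ≠ l →
      ∃ σ ∈ G, (σ i = k ∧ σ j = l) ∨ (σ i = l ∧ σ j = k))
    (C : Submodule (ZMod 2) (BV m))
    (hInv : ∀ σ ∈ G, ∀ v ∈ C, (fun i => v (σ.symm i)) ∈ C)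
    (hδ : IsMinDist (C : Set (BV m)) m)
    (X : Set (Perm (BV m)))
    (hX : X = {g | ∃ σ ∈ G, ∃ c ∈ C, ∀ v, g v = (fun i => v (σ.symm i)) + c}) :
    (C : Set (BV m)) = {0, fun _ => 1} ∧ NbrTrans X (C : Set (BV m)) 2 :=
  stmt11_general m hm G hG C hδ X hX

end Paper
end

section
/- Let C be an (X,s)-neighbour-transitive code in H(m,q) with minimum distance δ. Then for every codeword α ∈ C and every integer i with 1 ≤ i ≤ min{s, ⌊(δ−1)/2⌋}, the stabiliser X_α of α in X fixes setwise the sphere Γ_i(α) = {β ∈ V : d(α,β) = i} and acts transitively on it; in particular, the permutations of M induced by elements of X_α act transitively on the i-element subsets of M (X_α acts i-homogeneously on M). -/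
open Equiv

namespace Paper

/-!
When `2i < δ`, every point of the sphere `Γ_i(α)` about a codeword `α` lies in `C_i`, and `α` is
the only codeword within distance `i` of it. So an element of `X` carrying one point of `Γ_i(α)`
to another, which exists by transitivity on `C_i`, must fix `α`. Homogeneity on entries follows
because every `i`-subset of `M` is the set of entries where `α` differs from some point of
`Γ_i(α)`, and an automorphism `(h, σ)` fixing `α` moves these difference sets by `σ`.
-/

section HammingAut

open Finset

variable {m : ℕ} {Q : Type*} [DecidableEq Q] {g : Perm (Fin m → Q)} {h : Fin m → Perm Q}
  {σ : Perm (Fin m)}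

theorem IsQAutPair.filter_ne_apply (hg : IsQAutPair g h σ) (u v : Fin m → Q) :
    ({j | g u j ≠ g v j} : Finset (Fin m)) =
      ({j | u j ≠ v j} : Finset (Fin m)).map σ.toEmbedding := by
  ext j
  simp only [mem_filter, mem_univ, true_and, mem_map_equiv, hg u, hg v,
    (h j).injective.ne_iff]

theorem IsQAutPair.hammingDist_apply (hg : IsQAutPair g h σ) (u v : Fin m → Q) :
    hammingDist (g u) (g v) = hammingDist u v := by
  rw [hammingDist, hammingDist, hg.filter_ne_apply, card_map]

theorem IsQAut.hammingDist_apply (hg : IsQAut g) (u v : Fin m → Q) :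
    hammingDist (g u) (g v) = hammingDist u v :=
  let ⟨_, _, hg⟩ := hg
  hg.hammingDist_apply u v

end HammingAut

theorem eq_of_hammingDist_le_of_two_mul_lt {ι : Type*} [Fintype ι] {Q : Type*} [DecidableEq Q]
    {C : Set (ι → Q)} {δ i : ℕ}
    (hC : ∀ u ∈ C, ∀ v ∈ C, u ≠ v → δ ≤ hammingDist u v) (h2i : 2 * i < δ)
    {c c' x : ι → Q} (hc : c ∈ C) (hc' : c' ∈ C)
    (hcx : hammingDist c x ≤ i) (hc'x : hammingDist c' x ≤ i) : c = c' := by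
  by_contra hne
  have := hC c hc c' hc' hne
  have := hammingDist_triangle c x c'
  rw [hammingDist_comm x c'] at this
  omega

section MinDist

variable {m : ℕ} {Q : Type*} [DecidableEq Q] {C : Set (Fin m → Q)} {δ i : ℕ}

theorem mem_distSet_of_hammingDist_eq
    (hC : ∀ u ∈ C, ∀ v ∈ C, u ≠ v → δ ≤ hammingDist u v) (h2i : 2 * i < δ)
    {α β : Fin m → Q} (hα : α ∈ C) (hβ : hammingDist α β = i) : β ∈ distSet C i := by
  refine ⟨⟨α, hα, by rw [hammingDist_comm, hβ]⟩, fun c hc => ?_⟩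
  by_contra! hlt
  have hcα := eq_of_hammingDist_le_of_two_mul_lt hC h2i hc hα
    (by rw [hammingDist_comm]; omega) hβ.le
  subst hcα
  rw [hammingDist_comm] at hlt
  omega

theorem exists_stabilizer_apply_eq_of_hammingDist_eq {X : Set (Perm (Fin m → Q))} {s : ℕ}
    (hXaut : ∀ g ∈ X, IsQAut g) (hXC : ∀ g ∈ X, Set.MapsTo g C C) (hNT : NbrTrans X C s)
    (hC : ∀ u ∈ C, ∀ v ∈ C, u ≠ v → δ ≤ hammingDist u v) (h2i : 2 * i < δ) (his : i ≤ s)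
    {α β γ : Fin m → Q} (hα : α ∈ C) (hβ : hammingDist α β = i) (hγ : hammingDist α γ = i) :
    ∃ g ∈ X, g α = α ∧ g β = γ := by
  obtain ⟨g, hgX, hgβ⟩ := hNT i his β (mem_distSet_of_hammingDist_eq hC h2i hα hβ)
    γ (mem_distSet_of_hammingDist_eq hC h2i hα hγ)
  have hgαγ : hammingDist (g α) γ = i := by rw [← hgβ, (hXaut g hgX).hammingDist_apply, hβ]
  exact ⟨g, hgX, eq_of_hammingDist_le_of_two_mul_lt hC h2i (hXC g hgX hα) hα
    hgαγ.le hγ.le, hgβ⟩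

end MinDist

theorem exists_filter_ne_eq {ι : Type*} [Fintype ι] [DecidableEq ι] {Q : Type*} [DecidableEq Q]
    [Nontrivial Q] (α : ι → Q) (S : Finset ι) :
    ∃ β : ι → Q, ({j | α j ≠ β j} : Finset ι) = S := by
  choose other hother using fun a : Q => exists_ne a
  refine ⟨fun j => if j ∈ S then other (α j) else α j, ?_⟩
  ext j
  by_cases hj : j ∈ S <;> simp [hj, (hother (α j)).symm]

theorem stmt16_general (m s δ : ℕ) (Q : Type) [DecidableEq Q]
    (C : Set (Fin m → Q)) (X : Subgroup (Perm (Fin m → Q)))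
    (hXaut : ∀ g ∈ X, IsQAut g)
    (hXC : ∀ g ∈ X, g '' C = C)
    (hNT : NbrTrans (X : Set (Perm (Fin m → Q))) C s)
    (hδ : IsMinDist C δ) :
    ∀ α ∈ C, ∀ i : ℕ, 1 ≤ i → i ≤ min s ((δ - 1) / 2) →
      -- `X_α` fixes the sphere `Γ_i(α)` setwise
      (∀ g ∈ X, g α = α → ∀ β, hammingDist α β = i → hammingDist α (g β) = i) ∧
      -- `X_α` acts transitively on `Γ_i(α)`
      (∀ β γ : Fin m → Q, hammingDist α β = i → hammingDist α γ = i →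
        ∃ g ∈ X, g α = α ∧ g β = γ) ∧
      -- `X_α` acts `i`-homogeneously on `M`
      (∀ S1 S2 : Finset (Fin m), S1.card = i → S2.card = i →
        ∃ g ∈ X, g α = α ∧ ∃ h σ, IsQAutPair g h σ ∧ S1.image (fun x => σ x) = S2) := by
  intro α hα i hi1 hi
  obtain ⟨⟨u, -, v, -, huv, -⟩, hC⟩ := hδ
  have h2i : 2 * i < δ := by omega
  have transitive : ∀ β γ : Fin m → Q, hammingDist α β = i → hammingDist α γ = i →
      ∃ g ∈ X, g α = α ∧ g β = γ := fun β γ =>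
    exists_stabilizer_apply_eq_of_hammingDist_eq hXaut
      (fun g hg => (Set.mapsTo_image g C).mono_right (hXC g hg).subset) hNT hC h2i (by omega) hα
  refine ⟨fun g hg hgα β hβ => ?_, transitive, fun S1 S2 hS1 hS2 => ?_⟩
  · rw [← hgα, (hXaut g hg).hammingDist_apply, hβ]
  · obtain ⟨j, hj⟩ := Function.ne_iff.mp huv
    have : Nontrivial Q := nontrivial_of_ne _ _ hj
    obtain ⟨β, rfl⟩ := exists_filter_ne_eq α S1
    obtain ⟨γ, rfl⟩ := exists_filter_ne_eq α S2
    obtain ⟨g, hgX, hgα, hgβ⟩ := transitive β γ hS1 hS2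
    obtain ⟨h, σ, hg⟩ := hXaut g hgX
    refine ⟨g, hgX, hgα, h, σ, hg, ?_⟩
    have hsupp := hg.filter_ne_apply α β
    rw [hgα, hgβ] at hsupp
    rw [hsupp]
    exact (Finset.map_eq_image σ.toEmbedding _).symm

theorem stmt16 (m q s δ : ℕ) (Q : Type) [Fintype Q] [DecidableEq Q]
    (hq : Fintype.card Q = q)
    (C : Set (Fin m → Q)) (X : Subgroup (Perm (Fin m → Q)))
    (hXaut : ∀ g ∈ X, IsQAut g)
    (hXC : ∀ g ∈ X, g '' C = C)
    (hNT : NbrTrans (X : Set (Perm (Fin m → Q))) C s)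
    (hδ : IsMinDist C δ) :
    ∀ α ∈ C, ∀ i : ℕ, 1 ≤ i → i ≤ min s ((δ - 1) / 2) →
      -- `X_α` fixes the sphere `Γ_i(α)` setwise
      (∀ g ∈ X, g α = α → ∀ β, hammingDist α β = i → hammingDist α (g β) = i) ∧
      -- `X_α` acts transitively on `Γ_i(α)`
      (∀ β γ : Fin m → Q, hammingDist α β = i → hammingDist α γ = i →
        ∃ g ∈ X, g α = α ∧ g β = γ) ∧
      -- `X_α` acts `i`-homogeneously on `M`
      (∀ S1 S2 : Finset (Fin m), S1.card = i → S2.card = i →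
        ∃ g ∈ X, g α = α ∧ ∃ h σ, IsQAutPair g h σ ∧ S1.image (fun x => σ x) = S2) :=
  stmt16_general m s δ Q C X hXaut hXC hNT hδ

end Paper
end
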